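/- arXiv:1608.02753 — 7 statements merged into one kernel-verified Lean document; each statement's English description precedes it below -/
import Mathlib

section
/- For every n ≥ 1, the function L_n inherits the basic Laplace–Stieltjes transform properties from L_0: L_n(0) = 1, 0 < L_n(s) ≤ 1 for all s ≥ 0, L_n is strictly decreasing on [0,∞), and L_n(s) → 0 as s → ∞. -/
open Filter Topology

/-- The recursively defined overflow Laplace–Stieltjes transforms:
`ovLST L0 ms 0 = L0` and
`ovLST L0 ms n s = L_{n-1}(μ_n + s) / (1 - L_{n-1}(s) + L_{n-1}(μ_n + s))`. -/
noncomputable def ovLST (L0 : ℝ → ℝ) (ms : ℕ → ℝ) : ℕ → ℝ → ℝ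
  | 0 => L0
  | n + 1 => fun s =>
      ovLST L0 ms n (ms (n + 1) + s) /
        (1 - ovLST L0 ms n s + ovLST L0 ms n (ms (n + 1) + s))

/-! The transform `L ↦ L (m + ·) / (1 - L + L (m + ·))` maps LST-like functions to LST-like
functions whenever `m ≥ 0`; the `≤ 1` bound comes for free from monotonicity and `L 0 = 1`, and
the strict decrease is that of `s ↦ (1 - L s) / L (m + s)`, whose numerator increases while its
denominator decreases. -/

structure IsLSTLike (L : ℝ → ℝ) : Prop where
  map_zero : L 0 = 1
  pos : ∀ s, 0 ≤ s → 0 < L s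
  strictAntiOn : StrictAntiOn L (Set.Ici 0)
  tendsto_atTop : Tendsto L atTop (𝓝 0)

/-- The overflow recursion `L_n = overflowStep L_{n-1} μ_n`. -/
noncomputable def overflowStep (L : ℝ → ℝ) (m : ℝ) (s : ℝ) : ℝ :=
  L (m + s) / (1 - L s + L (m + s))

namespace IsLSTLike

variable {L : ℝ → ℝ} {m : ℝ}

lemma le_one (hL : IsLSTLike L) {s : ℝ} (hs : 0 ≤ s) : L s ≤ 1 :=
  hL.map_zero ▸ hL.strictAntiOn.antitoneOn Set.self_mem_Ici hs hs

lemma overflowStep_denom_pos (hL : IsLSTLike L) (hm : 0 ≤ m) {s : ℝ} (hs : 0 ≤ s) :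
    0 < 1 - L s + L (m + s) := by
  linarith [hL.le_one hs, hL.pos (m + s) (by linarith)]

lemma overflowStep_strictAntiOn (hL : IsLSTLike L) (hm : 0 ≤ m) :
    StrictAntiOn (overflowStep L m) (Set.Ici 0) := by
  intro s (hs : 0 ≤ s) t (ht : 0 ≤ t) hst
  have hb : L t < L s := hL.strictAntiOn hs ht hst
  have ha : L (m + t) ≤ L (m + s) :=
    hL.strictAntiOn.antitoneOn (by simp; linarith) (by simp; linarith) (by linarith)
  have hat : 0 < L (m + t) := hL.pos _ (by linarith)
  have hbs : 0 ≤ 1 - L s := by linarith [hL.le_one hs]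
  rw [overflowStep, overflowStep, div_lt_div_iff₀ (hL.overflowStep_denom_pos hm ht)
    (hL.overflowStep_denom_pos hm hs)]
  have key : L (m + t) * (1 - L s) < L (m + s) * (1 - L t) :=
    calc L (m + t) * (1 - L s) ≤ L (m + s) * (1 - L s) := by gcongr
      _ < L (m + s) * (1 - L t) := by gcongr; linarith
  linarith

lemma overflowStep (hL : IsLSTLike L) (hm : 0 ≤ m) : IsLSTLike (overflowStep L m) where
  map_zero := by
    have : L m ≠ 0 := (hL.pos m hm).ne'
    simp [_root_.overflowStep, hL.map_zero, this]
  pos s hs := div_pos (hL.pos _ (by linarith)) (hL.overflowStep_denom_pos hm hs)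
  strictAntiOn := hL.overflowStep_strictAntiOn hm
  tendsto_atTop := by
    have hshift : Tendsto (fun s => L (m + s)) atTop (𝓝 0) :=
      hL.tendsto_atTop.comp (tendsto_atTop_add_const_left atTop m tendsto_id)
    have hdenom : Tendsto (fun s => 1 - L s + L (m + s)) atTop (𝓝 1) := by
      simpa using (tendsto_const_nhds.sub hL.tendsto_atTop).add hshift
    have hquot := hshift.div hdenom one_ne_zero
    rwa [zero_div] at hquot

end IsLSTLike

lemma isLSTLike_ovLST {L0 : ℝ → ℝ} {ms : ℕ → ℝ} (hms : ∀ n, 1 ≤ n → 0 < ms n)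
    (hL0 : IsLSTLike L0) (n : ℕ) : IsLSTLike (ovLST L0 ms n) := by
  induction n with
  | zero => exact hL0
  | succ n ih => exact ih.overflowStep (hms (n + 1) (by omega)).le

theorem stmt_0_general (ms : ℕ → ℝ)
    (hms : ∀ n, 1 ≤ n → 0 < ms n)
    (L0 : ℝ → ℝ) (hL00 : L0 0 = 1)
    (hL0pos : ∀ s, 0 ≤ s → 0 < L0 s)
    (hL0anti : StrictAntiOn L0 (Set.Ici 0))
    (hL0lim : Tendsto L0 atTop (nhds 0)) :
    ∀ n, 1 ≤ n →
      ovLST L0 ms n 0 = 1 ∧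
      (∀ s, 0 ≤ s → 0 < ovLST L0 ms n s ∧ ovLST L0 ms n s ≤ 1) ∧
      StrictAntiOn (ovLST L0 ms n) (Set.Ici 0) ∧
      Tendsto (ovLST L0 ms n) atTop (nhds 0) := by
  intro n _
  have hL := isLSTLike_ovLST hms ⟨hL00, hL0pos, hL0anti, hL0lim⟩ n
  exact ⟨hL.map_zero, fun s hs => ⟨hL.pos s hs, hL.le_one hs⟩, hL.strictAntiOn,
    hL.tendsto_atTop⟩

theorem stmt_0 (μ : ℝ) (hμ : 0 < μ) (ms : ℕ → ℝ)
    (hms : ∀ n, 1 ≤ n → 0 < ms n)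
    (hsum : HasSum (fun n => ms (n + 1)) μ)
    (L0 : ℝ → ℝ) (hL00 : L0 0 = 1)
    (hL0pos : ∀ s, 0 ≤ s → 0 < L0 s)
    (hL0anti : StrictAntiOn L0 (Set.Ici 0))
    (hL0lim : Tendsto L0 atTop (nhds 0)) :
    ∀ n, 1 ≤ n →
      ovLST L0 ms n 0 = 1 ∧
      (∀ s, 0 ≤ s → 0 < ovLST L0 ms n s ∧ ovLST L0 ms n s ≤ 1) ∧
      StrictAntiOn (ovLST L0 ms n) (Set.Ici 0) ∧
      Tendsto (ovLST L0 ms n) atTop (nhds 0) :=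
  stmt_0_general ms hms L0 hL00 hL0pos hL0anti hL0lim
end

section
/- For any λ ∈ (0, μ) there exists a feasible non-increasing service-rate series: a sequence (μ_n)_{n≥1} of positive reals with μ_1 ≥ μ_2 ≥ ··· and Σ_{n=1}^∞ μ_n ≤ μ such that, with p_n the blocking probabilities built from L_0 and this sequence, λ·p_n < μ − Σ_{i=1}^n μ_i holds for every n ≥ 1. -/
open Filter

/-- The blocking probability of the first `n` servers: `p_n = ∏_{i=1}^n L_{i-1}(μ_i)`. -/
noncomputable def blockP (L0 : ℝ → ℝ) (ms : ℕ → ℝ) (n : ℕ) : ℝ :=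
  ∏ i ∈ Finset.Icc 1 n, ovLST L0 ms (i - 1) (ms i)

theorem stmt_4 (μ lam : ℝ) (hμ : 0 < μ) (hlam0 : 0 < lam) (hlamμ : lam < μ)
    (L0 : ℝ → ℝ) (hL00 : L0 0 = 1)
    (hL0pos : ∀ s, 0 ≤ s → 0 < L0 s)
    (hL0anti : StrictAntiOn L0 (Set.Ici 0))
    (hL0lim : Tendsto L0 atTop (nhds 0)) :
    ∃ ms : ℕ → ℝ,
      (∀ n, 1 ≤ n → 0 < ms n) ∧
      (∀ n, 1 ≤ n → ms (n + 1) ≤ ms n) ∧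
      Summable (fun n => ms (n + 1)) ∧
      (∑' n : ℕ, ms (n + 1)) ≤ μ ∧
      (∀ n, 1 ≤ n → lam * blockP L0 ms n < μ - ∑ i ∈ Finset.Icc 1 n, ms i) := by
  set c : ℝ := (μ - lam) / 2 with hc
  have hc0 : 0 < c := by rw [hc]; linarith
  refine ⟨fun n => c * (2:ℝ)⁻¹ ^ n, ?_, ?_, ?_, ?_, ?_⟩
  · intro n _; exact mul_pos hc0 (by positivity)
  · intro n _
    have : ((2:ℝ)⁻¹) ^ (n + 1) ≤ (2:ℝ)⁻¹ ^ n := by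
      apply pow_le_pow_of_le_one (by norm_num) (by norm_num) (by omega)
    nlinarith
  · exact ((summable_geometric_of_lt_one (by norm_num) (by norm_num)).mul_left c).comp_injective
      (add_left_injective 1)
  · have hsum : (∑' n : ℕ, c * (2:ℝ)⁻¹ ^ (n + 1)) = c := by
      have : (∑' n : ℕ, c * (2:ℝ)⁻¹ ^ (n + 1))
          = c * (2:ℝ)⁻¹ * ∑' n : ℕ, (2:ℝ)⁻¹ ^ n := by
        rw [← tsum_mul_left]; congr 1; ext n; ring
      have h2 : ((1:ℝ) - 2⁻¹)⁻¹ = 2 := by norm_num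
      rw [this, tsum_geometric_of_lt_one (by norm_num) (by norm_num), h2]; ring
    rw [hsum]; nlinarith
  · intro n hn
    set ms : ℕ → ℝ := fun n => c * (2:ℝ)⁻¹ ^ n with hms
    -- bounds on ovLST
    have key : ∀ k, ∀ s : ℝ, 0 ≤ s → 0 < ovLST L0 ms k s ∧ ovLST L0 ms k s ≤ 1 := by
      intro k
      induction k with
      | zero =>
        intro s hs
        simp only [ovLST]
        refine ⟨hL0pos s hs, ?_⟩
        rcases eq_or_lt_of_le hs with h | h
        · simp [← h, hL00]
        · have := hL0anti (Set.mem_Ici.2 le_rfl) (Set.mem_Ici.2 hs) h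
          rw [hL00] at this; linarith
      | succ k ih =>
        intro s hs
        have hmpos : (0:ℝ) < ms (k + 1) := by positivity
        have hb := ih (ms (k + 1) + s) (by linarith)
        have ha := ih s hs
        have hD : 0 < 1 - ovLST L0 ms k s + ovLST L0 ms k (ms (k + 1) + s) := by
          have := ha.2; linarith [hb.1]
        constructor
        · show 0 < ovLST L0 ms k (ms (k+1) + s) / _
          exact div_pos hb.1 hD
        · show ovLST L0 ms k (ms (k+1) + s) / _ ≤ 1
          rw [div_le_one hD]
          linarith [ha.2]
    -- blockP bounds
    have hbp : blockP L0 ms n ≤ 1 ∧ 0 ≤ blockP L0 ms n := by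
      unfold blockP
      constructor
      · apply Finset.prod_le_one
        · intro i _; exact le_of_lt (key (i-1) (ms i) (by positivity)).1
        · intro i _; exact (key (i-1) (ms i) (by positivity)).2
      · exact Finset.prod_nonneg fun i _ => le_of_lt (key (i-1) (ms i) (by positivity)).1
    -- partial sum bound
    have hpart : ∑ i ∈ Finset.Icc 1 n, ms i ≤ c := by
      have heq : ∑ i ∈ Finset.Icc 1 n, ms i = ∑ k ∈ Finset.range n, ms (k + 1) := by
        rw [← Finset.Ico_add_one_right_eq_Icc, Finset.sum_Ico_eq_sum_range]
        simp [add_comm]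
      have hsummable : Summable (fun k : ℕ => ms (k + 1)) :=
        ((summable_geometric_of_lt_one (by norm_num) (by norm_num)).mul_left c).comp_injective
          (add_left_injective 1)
      have hle : ∑ k ∈ Finset.range n, ms (k + 1) ≤ ∑' k : ℕ, ms (k + 1) :=
        Summable.sum_le_tsum _ (fun k _ => by positivity) hsummable
      have hsum : (∑' k : ℕ, ms (k + 1)) = c := by
        have : (∑' k : ℕ, ms (k + 1)) = c * (2:ℝ)⁻¹ * ∑' k : ℕ, (2:ℝ)⁻¹ ^ k := by
          rw [← tsum_mul_left]; congr 1; ext k; simp [hms]; ring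
        have h2 : ((1:ℝ) - 2⁻¹)⁻¹ = 2 := by norm_num
        rw [this, tsum_geometric_of_lt_one (by norm_num) (by norm_num), h2]; ring
      rw [heq]; rw [hsum] at hle; exact hle
    have h1 : lam * blockP L0 ms n ≤ lam :=
      mul_le_of_le_one_right (le_of_lt hlam0) hbp.1
    have h2 : lam < μ - c := by rw [hc]; linarith
    linarith
end

section
/- For every n ≥ 1 the iterated recursion yields the product formula L_{n−1}(μ_n) = L_0(Σ_{i=1}^n μ_i) / ∏_{i=1}^{n−1} [ 1 − L_{i−1}(Σ_{k=i+1}^n μ_k) + L_{i−1}(Σ_{k=i}^n μ_k) ]. -/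
open Filter

lemma ovLST_key (L0 : ℝ → ℝ) (ms : ℕ → ℝ) :
    ∀ n s, ovLST L0 ms n s =
      L0 (s + ∑ i ∈ Finset.Icc 1 n, ms i) /
        ∏ i ∈ Finset.Icc 1 n,
          (1 - ovLST L0 ms (i - 1) (s + ∑ k ∈ Finset.Icc (i + 1) n, ms k) +
            ovLST L0 ms (i - 1) (s + ∑ k ∈ Finset.Icc i n, ms k)) := by
  intro n
  induction n with
  | zero => intro s; simp [ovLST]
  | succ n ih =>
    intro s
    have hunf : ovLST L0 ms (n + 1) s =
        ovLST L0 ms n (ms (n + 1) + s) /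
          (1 - ovLST L0 ms n s + ovLST L0 ms n (ms (n + 1) + s)) := rfl
    rw [hunf, ih, div_div]
    have hsum1 : ms (n + 1) + s + ∑ i ∈ Finset.Icc 1 n, ms i =
        s + ∑ i ∈ Finset.Icc 1 (n + 1), ms i := by
      rw [Finset.sum_Icc_succ_top (by omega : 1 ≤ n + 1)]; ring
    rw [hsum1]
    congr 1
    rw [Finset.prod_Icc_succ_top (by omega : 1 ≤ n + 1)]
    congr 1
    · apply Finset.prod_congr rfl
      intro i hi
      simp only [Finset.mem_Icc] at hi
      have h1 : ms (n + 1) + s + ∑ k ∈ Finset.Icc (i + 1) n, ms k =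
          s + ∑ k ∈ Finset.Icc (i + 1) (n + 1), ms k := by
        rw [Finset.sum_Icc_succ_top (by omega : i + 1 ≤ n + 1)]; ring
      have h2 : ms (n + 1) + s + ∑ k ∈ Finset.Icc i n, ms k =
          s + ∑ k ∈ Finset.Icc i (n + 1), ms k := by
        rw [Finset.sum_Icc_succ_top (by omega : i ≤ n + 1)]; ring
      rw [h1, h2]
    · have e1 : Finset.Icc (n + 1 + 1) (n + 1) = ∅ := by
        apply Finset.Icc_eq_empty; omega
      have e2 : Finset.Icc (n + 1) (n + 1) = {n + 1} := Finset.Icc_self _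
      simp only [e1, e2, Finset.sum_empty, Finset.sum_singleton, add_zero,
        Nat.add_sub_cancel]
      rw [show s + ms (n + 1) = ms (n + 1) + s from add_comm _ _,
        ih (ms (n + 1) + s), hsum1]

theorem stmt_5
    (μ : ℝ) (hμ : 0 < μ) (ms : ℕ → ℝ)
    (hms : ∀ n, 1 ≤ n → 0 < ms n)
    (hsum : HasSum (fun n => ms (n + 1)) μ)
    (L0 : ℝ → ℝ) (hL00 : L0 0 = 1)
    (hL0pos : ∀ s, 0 ≤ s → 0 < L0 s)
    (hL0anti : StrictAntiOn L0 (Set.Ici 0))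
    (hL0lim : Tendsto L0 atTop (nhds 0))
    :
    ∀ n, 1 ≤ n →
      ovLST L0 ms (n - 1) (ms n) =
        L0 (∑ i ∈ Finset.Icc 1 n, ms i) /
          ∏ i ∈ Finset.Icc 1 (n - 1),
            (1 - ovLST L0 ms (i - 1) (∑ k ∈ Finset.Icc (i + 1) n, ms k) +
              ovLST L0 ms (i - 1) (∑ k ∈ Finset.Icc i n, ms k)) := by
  rintro (_ | m) hn
  · omega
  · simp only [Nat.add_sub_cancel]
    rw [ovLST_key L0 ms m (ms (m + 1))]
    have hsum1 : ms (m + 1) + ∑ i ∈ Finset.Icc 1 m, ms i =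
        ∑ i ∈ Finset.Icc 1 (m + 1), ms i := by
      rw [Finset.sum_Icc_succ_top (by omega : 1 ≤ m + 1)]; ring
    rw [hsum1]
    congr 1
    apply Finset.prod_congr rfl
    intro i hi
    simp only [Finset.mem_Icc] at hi
    have h1 : ms (m + 1) + ∑ k ∈ Finset.Icc (i + 1) m, ms k =
        ∑ k ∈ Finset.Icc (i + 1) (m + 1), ms k := by
      rw [Finset.sum_Icc_succ_top (by omega : i + 1 ≤ m + 1)]; ring
    have h2 : ms (m + 1) + ∑ k ∈ Finset.Icc i m, ms k =
        ∑ k ∈ Finset.Icc i (m + 1), ms k := by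
      rw [Finset.sum_Icc_succ_top (by omega : i ≤ m + 1)]; ring
    rw [h1, h2]
end

section
/- Assume in addition that p_n → 0 and that ℓ_n converges to a limit ℓ. Then ℓ = 1 if and only if the distribution (q_n) of the index Y of the fastest idle server is heavy-tailed, i.e., if and only if Σ_{n=1}^∞ q_n e^{ηn} = ∞ for every η > 0. -/
/-!
Write `e n` for the ratio `p (n + 1) / p n` (this is `ℓ_{n+1}`) and `g n = p n * exp (η * n)`,
so that `g (n + 1) = g n * e n * exp η`. Since `p n → 0`, the tail `∑_{k ≥ n} q_k e^{η (k+1)}`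
telescopes to at least `g n`; so if the series converges, `g n → 0`. When `ℓ = 1` this is
impossible, because `e n * exp η > 1` eventually and `g` eventually increases. When `ℓ < 1`,
choose `η > 0` with `ℓ e^η < 1`: the ratio test makes `g` summable, and `q_n ≤ p_n`.
-/

open Filter

open Topology Real

lemma Antitone.hasSum_sub_succ {f : ℕ → ℝ} {a : ℝ} (hf : Antitone f)
    (h : Tendsto f atTop (𝓝 a)) : HasSum (fun n => f n - f (n + 1)) (f 0 - a) := by
  rw [hasSum_iff_tendsto_nat_of_nonneg fun n => sub_nonneg.2 (hf n.le_succ)]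
  simp_rw [Finset.sum_range_sub']
  exact tendsto_const_nhds.sub h

section GeometricTail

variable {p e : ℕ → ℝ}

lemma mul_exp_succ_of_eq_mul (hpe : ∀ n, p (n + 1) = p n * e n) (η : ℝ) (n : ℕ) :
    p (n + 1) * exp (η * (n + 1 : ℕ)) = p n * exp (η * n) * (e n * exp η) := by
  rw [hpe, Nat.cast_succ, mul_add, mul_one, exp_add]
  ring

lemma tendsto_mul_exp_zero_of_summable (hp : Antitone p) (hp0 : Tendsto p atTop (𝓝 0))
    {η : ℝ} (hη : 0 ≤ η)
    (hS : Summable fun n : ℕ => (p n - p (n + 1)) * exp (η * (n + 1))) :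
    Tendsto (fun n : ℕ => p n * exp (η * n)) atTop (𝓝 0) := by
  set F := fun n : ℕ => (p n - p (n + 1)) * exp (η * (n + 1))
  have hp_nonneg : ∀ n, 0 ≤ p n := fun n => hp.le_of_tendsto hp0 n
  have htail : ∀ n, p n * exp (η * n) ≤ ∑' k, F (k + n) := by
    intro n
    have hshift : Antitone fun k => p (k + n) := fun a b hab => hp (by omega)
    have hsum := (hshift.hasSum_sub_succ (hp0.comp (tendsto_add_atTop_nat n))).mul_right
      (exp (η * n))
    simp only [zero_add, sub_zero] at hsum
    refine hasSum_le (fun k => ?_) hsum ((summable_nat_add_iff n).2 hS).hasSum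
    show _ ≤ (p (k + n) - p (k + n + 1)) * exp (η * ((k + n : ℕ) + 1))
    rw [Nat.add_right_comm k 1 n]
    refine mul_le_mul_of_nonneg_left (exp_le_exp.2 ?_) (sub_nonneg.2 (hp (k + n).le_succ))
    push_cast
    nlinarith [(k.cast_nonneg : (0 : ℝ) ≤ k)]
  exact squeeze_zero (fun n => mul_nonneg (hp_nonneg n) (exp_nonneg _)) htail
    (tendsto_sum_nat_add F)

lemma not_tendsto_mul_exp_zero (hp : ∀ n, 0 < p n) (hpe : ∀ n, p (n + 1) = p n * e n)
    (he : Tendsto e atTop (𝓝 1)) {η : ℝ} (hη : 0 < η) :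
    ¬Tendsto (fun n : ℕ => p n * exp (η * n)) atTop (𝓝 0) := by
  obtain ⟨N, hN⟩ := eventually_atTop.1 (he.eventually (eventually_ge_nhds
    (exp_lt_one_iff.2 (neg_lt_zero.2 hη))))
  have hmono : Monotone fun k => p (k + N) * exp (η * (k + N : ℕ)) := by
    refine monotone_nat_of_le_succ fun k => ?_
    rw [Nat.add_right_comm, mul_exp_succ_of_eq_mul hpe]
    refine le_mul_of_one_le_right (mul_nonneg (hp _).le (exp_nonneg _)) ?_
    calc 1 = exp (-η) * exp η := by rw [← exp_add, neg_add_cancel, exp_zero]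
      _ ≤ e (k + N) * exp η := by gcongr; exact hN _ (Nat.le_add_left N k)
  intro h
  exact (mul_pos (hp _) (exp_pos _)).not_ge
    (hmono.ge_of_tendsto (h.comp (tendsto_add_atTop_nat N)) 0)

lemma exists_summable_of_tendsto_lt_one (hp : ∀ n, 0 < p n)
    (hpe : ∀ n, p (n + 1) = p n * e n) (he1 : ∀ n, e n ≤ 1) {l : ℝ}
    (he : Tendsto e atTop (𝓝 l)) (hl : l < 1) :
    ∃ η, 0 < η ∧ Summable fun n : ℕ => (p n - p (n + 1)) * exp (η * (n + 1)) := by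
  have hl0 : 0 ≤ l := ge_of_tendsto' he fun n =>
    (pos_of_mul_pos_right (hpe n ▸ hp (n + 1)) (hp n).le).le
  set η := log (2 / (1 + l))
  have hexp : exp η = 2 / (1 + l) := exp_log (by positivity)
  have hη : 0 < η := log_pos (by rw [one_lt_div (by linarith)]; linarith)
  have hratio : l * exp η < 1 := by
    rw [hexp, ← mul_div_assoc, div_lt_one (by linarith)]
    linarith
  have hg : Summable fun n : ℕ => p n * exp (η * n) := by
    refine summable_of_ratio_test_tendsto_lt_one hratio
      (Eventually.of_forall fun n => (mul_pos (hp n) (exp_pos _)).ne') ?_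
    refine (he.mul_const (exp η)).congr fun n => ?_
    rw [norm_of_nonneg (mul_pos (hp _) (exp_pos _)).le,
      norm_of_nonneg (mul_pos (hp _) (exp_pos _)).le, mul_exp_succ_of_eq_mul hpe,
      mul_div_cancel_left₀ _ (mul_pos (hp n) (exp_pos _)).ne']
  refine ⟨η, hη, (hg.mul_right (exp η)).of_nonneg_of_le (fun n => ?_) (fun n => ?_)⟩
  · have : p (n + 1) ≤ p n := by rw [hpe]; exact mul_le_of_le_one_right (hp n).le (he1 n)
    exact mul_nonneg (sub_nonneg.2 this) (exp_nonneg _)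
  · rw [mul_assoc, ← exp_add, mul_add, mul_one]
    exact mul_le_mul_of_nonneg_right (sub_le_self _ (hp _).le) (exp_nonneg _)

theorem eq_one_iff_forall_not_summable (hp : ∀ n, 0 < p n)
    (hpe : ∀ n, p (n + 1) = p n * e n) (he1 : ∀ n, e n ≤ 1)
    (hp0 : Tendsto p atTop (𝓝 0)) {l : ℝ} (he : Tendsto e atTop (𝓝 l)) :
    l = 1 ↔ ∀ η : ℝ, 0 < η →
      ¬Summable fun n : ℕ => (p n - p (n + 1)) * exp (η * (n + 1)) := by
  have hanti : Antitone p := antitone_nat_of_succ_le fun n => by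
    rw [hpe]; exact mul_le_of_le_one_right (hp n).le (he1 n)
  constructor
  · rintro rfl η hη hS
    exact not_tendsto_mul_exp_zero hp hpe he hη
      (tendsto_mul_exp_zero_of_summable hanti hp0 hη.le hS)
  · intro h
    by_contra hl
    obtain ⟨η, hη, hS⟩ := exists_summable_of_tendsto_lt_one hp hpe he1 he
      ((le_of_tendsto' he he1).lt_of_ne hl)
    exact h η hη hS

end GeometricTail

lemma ovLST_mem_Ioo {L0 : ℝ → ℝ} {ms : ℕ → ℝ} (hms : ∀ n, 1 ≤ n → 0 < ms n)
    (hL00 : L0 0 = 1) (hL0pos : ∀ s, 0 ≤ s → 0 < L0 s)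
    (hL0anti : StrictAntiOn L0 (Set.Ici 0)) (n : ℕ) {s : ℝ} (hs : 0 < s) :
    ovLST L0 ms n s ∈ Set.Ioo 0 1 := by
  induction n generalizing s with
  | zero =>
    exact ⟨hL0pos s hs.le, hL00 ▸ hL0anti Set.self_mem_Ici (Set.mem_Ici.2 hs.le) hs⟩
  | succ n ih =>
    obtain ⟨hshift_pos, -⟩ := ih (add_pos (hms (n + 1) (Nat.le_add_left 1 n)) hs)
    obtain ⟨-, hlt_one⟩ := ih hs
    have hden : 0 < 1 - ovLST L0 ms n s + ovLST L0 ms n (ms (n + 1) + s) := by linarith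
    exact ⟨div_pos hshift_pos hden, (div_lt_one hden).2 (by linarith)⟩

lemma blockP_succ (L0 : ℝ → ℝ) (ms : ℕ → ℝ) (n : ℕ) :
    blockP L0 ms (n + 1) = blockP L0 ms n * ovLST L0 ms n (ms (n + 1)) := by
  rw [blockP, blockP, Finset.prod_Icc_succ_top (Nat.le_add_left 1 n), Nat.add_sub_cancel]

lemma blockP_pos {L0 : ℝ → ℝ} {ms : ℕ → ℝ} (hms : ∀ n, 1 ≤ n → 0 < ms n)
    (hL00 : L0 0 = 1) (hL0pos : ∀ s, 0 ≤ s → 0 < L0 s)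
    (hL0anti : StrictAntiOn L0 (Set.Ici 0)) (n : ℕ) : 0 < blockP L0 ms n := by
  induction n with
  | zero => simp [blockP]
  | succ n ih =>
    rw [blockP_succ]
    exact mul_pos ih (ovLST_mem_Ioo hms hL00 hL0pos hL0anti n
      (hms (n + 1) (Nat.le_add_left 1 n))).1

theorem stmt_9_general
    (ms : ℕ → ℝ)
    (hms : ∀ n, 1 ≤ n → 0 < ms n)
    (L0 : ℝ → ℝ) (hL00 : L0 0 = 1)
    (hL0pos : ∀ s, 0 ≤ s → 0 < L0 s)
    (hL0anti : StrictAntiOn L0 (Set.Ici 0))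
    (l : ℝ)
    (hp0 : Tendsto (blockP L0 ms) atTop (nhds 0))
    (hl : Tendsto (fun n => ovLST L0 ms n (ms (n + 1))) atTop (nhds l)) :
    l = 1 ↔
      ∀ η : ℝ, 0 < η →
        ¬ Summable (fun n : ℕ =>
          (blockP L0 ms n - blockP L0 ms (n + 1)) * Real.exp (η * (n + 1))) :=
  eq_one_iff_forall_not_summable (blockP_pos hms hL00 hL0pos hL0anti) (blockP_succ L0 ms)
    (fun n => (ovLST_mem_Ioo hms hL00 hL0pos hL0anti n
      (hms (n + 1) (Nat.le_add_left 1 n))).2.le) hp0 hl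

theorem stmt_9
    (μ : ℝ) (hμ : 0 < μ) (ms : ℕ → ℝ)
    (hms : ∀ n, 1 ≤ n → 0 < ms n)
    (hsum : HasSum (fun n => ms (n + 1)) μ)
    (L0 : ℝ → ℝ) (hL00 : L0 0 = 1)
    (hL0pos : ∀ s, 0 ≤ s → 0 < L0 s)
    (hL0anti : StrictAntiOn L0 (Set.Ici 0))
    (hL0lim : Tendsto L0 atTop (nhds 0))
    (l : ℝ)
    (hp0 : Tendsto (blockP L0 ms) atTop (nhds 0))
    (hl : Tendsto (fun n => ovLST L0 ms n (ms (n + 1))) atTop (nhds l)) :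
    l = 1 ↔
      ∀ η : ℝ, 0 < η →
        ¬ Summable (fun n : ℕ =>
          (blockP L0 ms n - blockP L0 ms (n + 1)) * Real.exp (η * (n + 1))) :=
  stmt_9_general ms hms L0 hL00 hL0pos hL0anti l hp0 hl
end

section
/- Let ℓ ∈ (0,1). For every sequence (μ_n)_{n≥1} of positive reals with Σ_{n=1}^∞ μ_n = 1, one has Σ_{n=1}^∞ ℓ^n/μ_n ≥ ℓ/(1 − √ℓ)². Moreover, the geometric sequence μ_n = (1 − √ℓ)·(√ℓ)^{n−1} satisfies Σ_{n=1}^∞ μ_n = 1 and achieves equality: Σ_{n=1}^∞ ℓ^n/μ_n = ℓ/(1 − √ℓ)². Hence the Tail Approximation Program min { Σ ℓ^n/μ_n : μ_n > 0, Σ μ_n = 1 } is solved by μ_n = (1 − √ℓ) ℓ^{(n−1)/2}. -/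
/-!
Write `s = √ℓ`, so `ℓⁿ⁺¹ = (sⁿ⁺¹)²` and `∑ sⁿ⁺¹ = s / (1 - s)`. The lower bound is the
Cauchy–Schwarz inequality `(∑ xₙ)² ≤ (∑ xₙ² / μₙ)(∑ μₙ)` with `xₙ = sⁿ⁺¹`; equality holds when
`μₙ` is proportional to `xₙ`, i.e. for the geometric weights `(1 - s) sⁿ`.
-/

open Real

theorem two_mul_mul_le_sq_div_add_sq_mul (a x : ℝ) {m : ℝ} (hm : 0 < m) :
    2 * a * x ≤ x ^ 2 / m + a ^ 2 * m := by
  rw [div_add' _ _ _ hm.ne', le_div_iff₀ hm]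
  nlinarith [sq_nonneg (x - a * m)]

theorem tsum_ofReal_eq_of_hasSum {f : ℕ → ℝ} {a : ℝ} (hf : ∀ n, 0 ≤ f n) (h : HasSum f a) :
    ∑' n, ENNReal.ofReal (f n) = ENNReal.ofReal a := by
  rw [← ENNReal.ofReal_tsum_of_nonneg hf h.summable, h.tsum_eq]

/-- The right side is taken in `ℝ≥0∞` so that a divergent `∑ xₙ² / mₙ` is allowed. -/
theorem ofReal_sq_le_tsum_ofReal_sq_div {x m : ℕ → ℝ} {A : ℝ} (hx : ∀ n, 0 ≤ x n)
    (hm : ∀ n, 0 < m n) (hxA : HasSum x A) (hm1 : HasSum m 1) :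
    ENNReal.ofReal (A ^ 2) ≤ ∑' n, ENNReal.ofReal (x n ^ 2 / m n) := by
  have hA : 0 ≤ A := hxA.nonneg hx
  -- Summing `2 A xₙ ≤ xₙ² / mₙ + A² mₙ` gives `2 A² ≤ S + A²`.
  have amgm : ∀ n, ENNReal.ofReal (2 * A * x n) ≤
      ENNReal.ofReal (x n ^ 2 / m n) + ENNReal.ofReal (A ^ 2 * m n) := fun n =>
    (ENNReal.ofReal_le_ofReal (two_mul_mul_le_sq_div_add_sq_mul A (x n) (hm n))).trans
      ENNReal.ofReal_add_le
  have hsum := ENNReal.tsum_le_tsum amgm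
  rw [ENNReal.tsum_add,
    tsum_ofReal_eq_of_hasSum (fun n => by have := hx n; positivity) (hxA.mul_left (2 * A)),
    tsum_ofReal_eq_of_hasSum (fun n => by have := hm n; positivity) (hm1.mul_left (A ^ 2)),
    mul_one, show 2 * A * A = A ^ 2 + A ^ 2 by ring,
    ENNReal.ofReal_add (by positivity) (by positivity)] at hsum
  exact (ENNReal.add_le_add_iff_right ENNReal.ofReal_ne_top).mp hsum

theorem hasSum_geometric_succ_of_lt_one {r : ℝ} (h₀ : 0 ≤ r) (h₁ : r < 1) :
    HasSum (fun n : ℕ => r ^ (n + 1)) (r / (1 - r)) := by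
  simpa only [pow_succ', div_eq_mul_inv] using (hasSum_geometric_of_lt_one h₀ h₁).mul_left r

theorem hasSum_one_sub_mul_geometric {r : ℝ} (h₀ : 0 ≤ r) (h₁ : r < 1) :
    HasSum (fun n : ℕ => (1 - r) * r ^ n) 1 := by
  simpa only [mul_inv_cancel₀ (sub_pos.2 h₁).ne'] using
    (hasSum_geometric_of_lt_one h₀ h₁).mul_left (1 - r)

theorem hasSum_sq_pow_succ_div_geometric {r : ℝ} (h₀ : 0 < r) (h₁ : r < 1) :
    HasSum (fun n : ℕ => (r ^ 2) ^ (n + 1) / ((1 - r) * r ^ n)) (r ^ 2 / (1 - r) ^ 2) := by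
  have hr : 1 - r ≠ 0 := (sub_pos.2 h₁).ne'
  have hterm : ∀ n : ℕ, (r ^ 2) ^ (n + 1) / ((1 - r) * r ^ n) = r ^ 2 / (1 - r) * r ^ n := by
    intro n
    field_simp
    ring
  rw [show r ^ 2 / (1 - r) ^ 2 = r ^ 2 / (1 - r) * (1 - r)⁻¹ by field_simp]
  simpa only [hterm] using (hasSum_geometric_of_lt_one h₀.le h₁).mul_left (r ^ 2 / (1 - r))

theorem stmt_15 (l : ℝ) (hl0 : 0 < l) (hl1 : l < 1) :
    (∀ ms : ℕ → ℝ, (∀ n, 0 < ms n) → HasSum ms 1 →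
      ENNReal.ofReal (l / (1 - Real.sqrt l) ^ 2) ≤
        ∑' n : ℕ, ENNReal.ofReal (l ^ (n + 1) / ms n)) ∧
    HasSum (fun n : ℕ => (1 - Real.sqrt l) * Real.sqrt l ^ n) 1 ∧
    ∑' n : ℕ, l ^ (n + 1) / ((1 - Real.sqrt l) * Real.sqrt l ^ n) =
      l / (1 - Real.sqrt l) ^ 2 := by
  obtain ⟨s, hs0, rfl⟩ : ∃ s, 0 < s ∧ l = s ^ 2 := ⟨√l, sqrt_pos.2 hl0, (sq_sqrt hl0.le).symm⟩
  have hs1 : s < 1 := by nlinarith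
  rw [sqrt_sq hs0.le]
  refine ⟨fun ms hms hms1 => ?_, hasSum_one_sub_mul_geometric hs0.le hs1,
    (hasSum_sq_pow_succ_div_geometric hs0 hs1).tsum_eq⟩
  simpa only [div_pow, ← pow_mul, mul_comm 2] using
    ofReal_sq_le_tsum_ofReal_sq_div (fun n => by positivity) hms
      (hasSum_geometric_succ_of_lt_one hs0.le hs1) hms1
end

section
/- With s_0 = 0 and s_{n−1} = Σ_{i=1}^{n−1} μ_i, define the lower-bound series ℓ̲_n = L_{n−1}(μ − s_{n−1}). Then ℓ_n ≥ ℓ̲_n for every n ≥ 1, and the sequence (ℓ̲_n)_{n≥1} is strictly increasing: L_n(μ − s_n) > L_{n−1}(μ − s_{n−1}) for all n ≥ 1. -/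
open Filter

lemma ovLST_props (ms : ℕ → ℝ) (hms : ∀ n, 1 ≤ n → 0 < ms n)
    (L0 : ℝ → ℝ) (hL00 : L0 0 = 1)
    (hL0pos : ∀ s, 0 ≤ s → 0 < L0 s)
    (hL0anti : StrictAntiOn L0 (Set.Ici 0)) :
    ∀ n, ovLST L0 ms n 0 = 1 ∧ (∀ s, 0 ≤ s → 0 < ovLST L0 ms n s) ∧
      StrictAntiOn (ovLST L0 ms n) (Set.Ici 0) := by
  intro n
  induction n with
  | zero => exact ⟨hL00, hL0pos, hL0anti⟩
  | succ n ih =>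
    obtain ⟨h1, h2, h3⟩ := ih
    have hm : 0 < ms (n + 1) := hms (n + 1) (by omega)
    have hle1 : ∀ s : ℝ, 0 ≤ s → ovLST L0 ms n s ≤ 1 := by
      intro s hs
      rcases eq_or_lt_of_le hs with h | h
      · rw [← h, h1]
      · have := h3 (Set.mem_Ici.mpr le_rfl) (Set.mem_Ici.mpr hs) h
        rw [h1] at this; exact this.le
    have hD : ∀ s : ℝ, 0 ≤ s →
        0 < 1 - ovLST L0 ms n s + ovLST L0 ms n (ms (n + 1) + s) := by
      intro s hs
      have hf : 0 < ovLST L0 ms n (ms (n + 1) + s) := h2 _ (by positivity)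
      have := hle1 s hs
      linarith
    refine ⟨?_, ?_, ?_⟩
    · show ovLST L0 ms n (ms (n+1) + 0) / (1 - ovLST L0 ms n 0 + ovLST L0 ms n (ms (n+1) + 0)) = 1
      have : 0 < ovLST L0 ms n (ms (n+1) + 0) := h2 _ (by positivity)
      rw [h1, sub_self, zero_add]
      exact div_self this.ne'
    · intro s hs
      exact div_pos (h2 _ (by positivity)) (hD s hs)
    · intro s hs t ht hst
      simp only [Set.mem_Ici] at hs ht
      show ovLST L0 ms n (ms (n+1) + t) / (1 - ovLST L0 ms n t + ovLST L0 ms n (ms (n+1) + t)) <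
        ovLST L0 ms n (ms (n+1) + s) / (1 - ovLST L0 ms n s + ovLST L0 ms n (ms (n+1) + s))
      set fs := ovLST L0 ms n (ms (n+1) + s) with hfs
      set ft := ovLST L0 ms n (ms (n+1) + t) with hft
      set gs := ovLST L0 ms n s with hgs
      set gt := ovLST L0 ms n t with hgt
      have hfspos : 0 < fs := h2 _ (by positivity)
      have hftpos : 0 < ft := h2 _ (by positivity)
      have hfts : ft < fs := h3 (Set.mem_Ici.mpr (by positivity))
        (Set.mem_Ici.mpr (by positivity)) (by linarith)
      have hgts : gt < gs := h3 (Set.mem_Ici.mpr hs) (Set.mem_Ici.mpr ht) hst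
      have hgs1 : gs ≤ 1 := hle1 s hs
      rw [div_lt_div_iff₀ (hD t ht) (hD s hs)]
      nlinarith

lemma icc_sum_le (μ : ℝ) (ms : ℕ → ℝ)
    (hms : ∀ n, 1 ≤ n → 0 < ms n)
    (hsum : HasSum (fun n => ms (n + 1)) μ) :
    ∀ n, ∑ i ∈ Finset.Icc 1 n, ms i ≤ μ := by
  have hrange : ∀ n, ∑ i ∈ Finset.Icc 1 n, ms i = ∑ i ∈ Finset.range n, ms (i + 1) := by
    intro n
    induction n with
    | zero => simp
    | succ n ih =>
      rw [Finset.sum_Icc_succ_top (by omega), Finset.sum_range_succ, ih]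
  intro n
  rw [hrange]
  exact sum_le_hasSum _ (fun i _ => (hms (i + 1) (by omega)).le) hsum

theorem stmt_16
    (μ : ℝ) (hμ : 0 < μ) (ms : ℕ → ℝ)
    (hms : ∀ n, 1 ≤ n → 0 < ms n)
    (hsum : HasSum (fun n => ms (n + 1)) μ)
    (L0 : ℝ → ℝ) (hL00 : L0 0 = 1)
    (hL0pos : ∀ s, 0 ≤ s → 0 < L0 s)
    (hL0anti : StrictAntiOn L0 (Set.Ici 0))
    (hL0lim : Tendsto L0 atTop (nhds 0))
    :
    (∀ n, 1 ≤ n →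
      ovLST L0 ms (n - 1) (μ - ∑ i ∈ Finset.Icc 1 (n - 1), ms i) ≤
        ovLST L0 ms (n - 1) (ms n)) ∧
    (∀ n, 1 ≤ n →
      ovLST L0 ms (n - 1) (μ - ∑ i ∈ Finset.Icc 1 (n - 1), ms i) <
        ovLST L0 ms n (μ - ∑ i ∈ Finset.Icc 1 n, ms i)) := by
  set S : ℕ → ℝ := fun n => ∑ i ∈ Finset.Icc 1 n, ms i with hS
  have hSle : ∀ n, S n ≤ μ := icc_sum_le μ ms hms hsum
  have hSsucc : ∀ n, S (n + 1) = S n + ms (n + 1) := by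
    intro n; simp only [hS]; rw [Finset.sum_Icc_succ_top (by omega)]
  have hSlt : ∀ n, S n < μ := by
    intro n
    have h1 := hSle (n + 1)
    have h2 := hms (n + 1) (by omega)
    have := hSsucc n
    linarith
  have props := ovLST_props ms hms L0 hL00 hL0pos hL0anti
  constructor
  · intro n hn
    obtain ⟨m, rfl⟩ : ∃ m, n = m + 1 := ⟨n - 1, by omega⟩
    simp only [Nat.add_sub_cancel]
    obtain ⟨h1, h2, h3⟩ := props m
    have hm1 : 0 < ms (m + 1) := hms (m + 1) (by omega)
    have hle : ms (m + 1) ≤ μ - S m := by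
      have := hSle (m + 1); have := hSsucc m; linarith
    rcases eq_or_lt_of_le hle with h | h
    · rw [h]
    · exact (h3 (Set.mem_Ici.mpr hm1.le) (Set.mem_Ici.mpr (by linarith)) h).le
  · intro n hn
    obtain ⟨m, rfl⟩ : ∃ m, n = m + 1 := ⟨n - 1, by omega⟩
    simp only [Nat.add_sub_cancel]
    obtain ⟨h1, h2, h3⟩ := props m
    have hm1 : 0 < ms (m + 1) := hms (m + 1) (by omega)
    have hlt : S (m + 1) < μ := hSlt (m + 1)
    have harg : ms (m + 1) + (μ - S (m + 1)) = μ - S m := by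
      have := hSsucc m; linarith
    show ovLST L0 ms m (μ - S m) <
      ovLST L0 ms m (ms (m+1) + (μ - S (m+1))) /
        (1 - ovLST L0 ms m (μ - S (m+1)) + ovLST L0 ms m (ms (m+1) + (μ - S (m+1))))
    rw [harg]
    set a := ovLST L0 ms m (μ - S (m + 1)) with ha
    set b := ovLST L0 ms m (μ - S m) with hb
    have hbpos : 0 < b := h2 _ (by have := hSle m; have := hSsucc m; linarith)
    have hba : b < a := h3 (Set.mem_Ici.mpr (by linarith))
      (Set.mem_Ici.mpr (by have := hSsucc m; linarith)) (by have := hSsucc m; linarith)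
    have ha1 : a < 1 := by
      have := h3 (Set.mem_Ici.mpr le_rfl) (Set.mem_Ici.mpr (by linarith : (0:ℝ) ≤ μ - S (m+1)))
        (by linarith)
      rw [h1] at this; exact this
    have hD : 0 < 1 - a + b := by linarith
    have hD1 : 1 - a + b < 1 := by linarith
    rw [lt_div_iff₀ hD]
    nlinarith
end

section
/- Let λ ∈ (0,1), let L_0(s) = λ/(λ + s) (the LST of exponential inter-arrival times, total capacity μ = 1), and set α = 1 − √λ, μ_1 = α, μ_2 = α(1 − α). Define L_1(s) = L_0(μ_1 + s)/(1 − L_0(s) + L_0(μ_1 + s)). Then L_0(μ_1) = L_1(μ_2) = λ/(1 − √λ + λ); that is, for a geometric capacity allocation with decay rate 1 − α, the first two overflow-blocking terms coincide exactly when α = 1 − √λ. -/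
theorem stmt_17 (lam : ℝ) (hlam0 : 0 < lam) (hlam1 : lam < 1)
    (L0 L1 : ℝ → ℝ) (α : ℝ)
    (hL0 : ∀ s : ℝ, L0 s = lam / (lam + s))
    (hα : α = 1 - Real.sqrt lam)
    (hL1 : ∀ s : ℝ, L1 s = L0 (α + s) / (1 - L0 s + L0 (α + s))) :
    L0 α = lam / (1 - Real.sqrt lam + lam) ∧
    L1 (α * (1 - α)) = lam / (1 - Real.sqrt lam + lam) := by
  set r := Real.sqrt lam with hr
  have hr0 : 0 < r := Real.sqrt_pos.mpr hlam0
  have hr2 : r ^ 2 = lam := Real.sq_sqrt hlam0.le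
  have hr1 : r < 1 := by nlinarith
  subst hα
  have h1 : lam + (1 - r) = r ^ 2 - r + 1 := by rw [hr2]; ring
  have hd1 : (0:ℝ) < r ^ 2 - r + 1 := by nlinarith
  have h2 : lam + (1 - r) * (1 - (1 - r)) = r := by rw [← hr2]; ring
  have h3 : lam + ((1 - r) + (1 - r) * (1 - (1 - r))) = 1 := by rw [← hr2]; ring
  constructor
  · rw [hL0, h1, ← hr2]; ring_nf
  · rw [hL1, hL0, hL0, h2, h3, ← hr2]
    rw [div_one]
    have hdd : 1 - r ^ 2 / r + r ^ 2 = r ^ 2 - r + 1 := by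
      field_simp
      ring
    rw [hdd]
    ring_nf
end
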